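/- Let 0 < α ≤ 1/3. There exists a constant C > 0, depending only on α, such that for every integer M ≥ 1 and every real u ≥ M^α: u³ ∫_0^{M^α} ⌊t^{1/α}⌋ / (t²(t² + u² + ut√2)) dt ≥ C u (M^{1−α} − 1). -/

import Mathlib

open MeasureTheory intervalIntegral

private lemma aux_alg (u β A D : ℝ) (hu : u ≠ 0) (hβ : β ≠ 0) (hD : D ≠ 0) :
    1/(D*β)*u*A = u^3*((A/β)*(1/(D*u^2))) := by
  field_simp

theorem lower_bound_integral_large_u (α : ℝ) (h1 : 0 < α) (h2 : α ≤ 1 / 3) :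
    ∃ C : ℝ, 0 < C ∧
      ∀ M : ℕ, 1 ≤ M → ∀ u : ℝ, (M : ℝ) ^ α ≤ u →
        C * u * ((M : ℝ) ^ (1 - α) - 1) ≤
          u ^ 3 * ∫ x in (0 : ℝ)..((M : ℝ) ^ α),
            ((⌊x ^ (1 / α)⌋ : ℤ) : ℝ) /
              (x ^ 2 * (x ^ 2 + u ^ 2 + u * x * Real.sqrt 2)) := by
  have hs : (0:ℝ) ≤ Real.sqrt 2 := Real.sqrt_nonneg 2
  have hα3 : 3 ≤ 1 / α := by
    rw [le_div_iff₀ h1]; linarith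
  have hαpos : 0 < 1 / α := by linarith
  set β : ℝ := 1 / α - 1 with hβdef
  clear_value β
  have hβ2 : 2 ≤ β := by rw [hβdef]; linarith
  have hβpos : 0 < β := by linarith
  have hDpos : 0 < 2 * (2 + Real.sqrt 2) * β := by nlinarith
  refine ⟨1 / (2 * (2 + Real.sqrt 2) * β), div_pos one_pos hDpos, ?_⟩
  intro M hM u hu
  set T : ℝ := (M:ℝ) ^ α with hTdef
  have hM1 : (1:ℝ) ≤ (M:ℝ) := by exact_mod_cast hM
  have hM0 : (0:ℝ) ≤ (M:ℝ) := by linarith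
  have hT1 : 1 ≤ T := Real.one_le_rpow hM1 h1.le
  have hu1 : 1 ≤ u := le_trans hT1 hu
  have hu0 : 0 < u := lt_of_lt_of_le one_pos hu1
  set f : ℝ → ℝ := fun x => ((⌊x ^ (1 / α)⌋ : ℤ) : ℝ) /
      (x ^ 2 * (x ^ 2 + u ^ 2 + u * x * Real.sqrt 2)) with hfdef
  clear_value f
  -- value of T^(1/α)
  have hTM : T ^ (1/α) = (M:ℝ) := by
    rw [hTdef, ← Real.rpow_mul hM0, mul_one_div_cancel h1.ne', Real.rpow_one]
  clear_value T
  -- measurability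
  have hmeas : Measurable f := by
    rw [hfdef]
    have hcont : Continuous fun x:ℝ => x ^ (1/α) :=
      continuous_iff_continuousAt.2 fun x => Real.continuousAt_rpow_const x _ (Or.inr hαpos.le)
    have h1m : Measurable fun x:ℝ => ((⌊x ^ (1/α)⌋:ℤ):ℝ) :=
      Measurable.comp (measurable_from_top (f := (Int.cast : ℤ → ℝ))) hcont.measurable.floor
    exact h1m.div (by fun_prop)
  -- nonnegativity
  have hfnn : ∀ x : ℝ, 0 ≤ x → 0 ≤ f x := by
    intro x hx
    rw [hfdef]
    apply div_nonneg
    · exact_mod_cast Int.floor_nonneg.2 (Real.rpow_nonneg hx _)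
    · positivity
  -- integrability
  have hint : ∀ a b : ℝ, 0 ≤ a → a ≤ b → b ≤ T → IntervalIntegrable f volume a b := by
    intro a b ha hab hbT
    rw [intervalIntegrable_iff, Set.uIoc_of_le hab]
    refine Integrable.mono' (g := fun _ => (M:ℝ))
      (integrableOn_const measure_Ioc_lt_top.ne)
      hmeas.aestronglyMeasurable.restrict ?_
    refine (ae_restrict_iff' measurableSet_Ioc).2 (Filter.Eventually.of_forall ?_)
    intro x hx
    have hx0 : 0 < x := lt_of_le_of_lt ha hx.1
    rw [Real.norm_eq_abs, abs_of_nonneg (hfnn x hx0.le), hfdef]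
    rcases lt_or_ge x 1 with hx1 | hx1
    · have hfl : ⌊x ^ (1/α)⌋ = 0 := Int.floor_eq_zero_iff.2
        ⟨Real.rpow_nonneg hx0.le _, Real.rpow_lt_one hx0.le hx1 hαpos⟩
      simp only [hfl, Int.cast_zero, zero_div]
      positivity
    · have hxT : x ≤ T := le_trans hx.2 hbT
      have hnum : ((⌊x ^ (1/α)⌋:ℤ):ℝ) ≤ (M:ℝ) := by
        calc ((⌊x ^ (1/α)⌋:ℤ):ℝ) ≤ x ^ (1/α) := Int.floor_le _
        _ ≤ T ^ (1/α) := Real.rpow_le_rpow hx0.le hxT hαpos.le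
        _ = (M:ℝ) := hTM
      have hden : 1 ≤ x ^ 2 * (x ^ 2 + u ^ 2 + u * x * Real.sqrt 2) := by
        have ha2 : 1 ≤ x ^ 2 := by nlinarith
        have hb2 : 1 ≤ x ^ 2 + u ^ 2 + u * x * Real.sqrt 2 := by
          nlinarith [mul_nonneg (mul_nonneg hu0.le hx0.le) hs]
        nlinarith
      calc ((⌊x ^ (1/α)⌋:ℤ):ℝ) / (x ^ 2 * (x ^ 2 + u ^ 2 + u * x * Real.sqrt 2))
          ≤ ((⌊x ^ (1/α)⌋:ℤ):ℝ) := div_le_self (by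
              exact_mod_cast Int.floor_nonneg.2 (Real.rpow_nonneg hx0.le _)) hden
        _ ≤ (M:ℝ) := hnum
  -- the comparison function
  set c : ℝ := 1 / (2 * (2 + Real.sqrt 2) * u ^ 2) with hcdef
  clear_value c
  have hcpos : 0 < c := by rw [hcdef]; apply div_pos one_pos; nlinarith
  set g : ℝ → ℝ := fun x => x ^ (1/α - 2) * c with hgdef
  clear_value g
  -- pointwise bound on [1, T]
  have hptwise : ∀ x ∈ Set.Icc (1:ℝ) T, g x ≤ f x := by
    intro x hx
    rw [hgdef, hfdef]
    simp only
    have hx1 : 1 ≤ x := hx.1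
    have hx0 : 0 < x := lt_of_lt_of_le one_pos hx1
    have hxu : x ≤ u := le_trans hx.2 hu
    have hy1 : 1 ≤ x ^ (1/α) := Real.one_le_rpow hx1 hαpos.le
    have hfloor : x ^ (1/α) / 2 ≤ ((⌊x ^ (1/α)⌋:ℤ):ℝ) := by
      rcases le_total (x ^ (1/α)) 2 with h | h
      · have h' : (1:ℤ) ≤ ⌊x ^ (1/α)⌋ := Int.le_floor.2 (by exact_mod_cast hy1)
        have h'' : (1:ℝ) ≤ ((⌊x ^ (1/α)⌋:ℤ):ℝ) := by exact_mod_cast h'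
        linarith
      · have := Int.sub_one_lt_floor (x ^ (1/α))
        linarith
    have hdd : x ^ 2 * (x ^ 2 + u ^ 2 + u * x * Real.sqrt 2) ≤
        x ^ 2 * ((2 + Real.sqrt 2) * u ^ 2) := by
      have hA : x ^ 2 ≤ u ^ 2 := pow_le_pow_left₀ hx0.le hxu 2
      have hB : u * x * Real.sqrt 2 ≤ u ^ 2 * Real.sqrt 2 := by
        apply mul_le_mul_of_nonneg_right _ hs
        calc u * x ≤ u * u := mul_le_mul_of_nonneg_left hxu hu0.le
          _ = u ^ 2 := (sq u).symm
      apply mul_le_mul_of_nonneg_left _ (sq_nonneg x)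
      linarith
    have hdpos : 0 < x ^ 2 * (x ^ 2 + u ^ 2 + u * x * Real.sqrt 2) := by positivity
    have hkey : (x ^ (1/α) / 2) / (x ^ 2 * ((2 + Real.sqrt 2) * u ^ 2)) ≤
        ((⌊x ^ (1/α)⌋:ℤ):ℝ) / (x ^ 2 * (x ^ 2 + u ^ 2 + u * x * Real.sqrt 2)) :=
      div_le_div₀ (by exact_mod_cast Int.floor_nonneg.2 (by linarith : (0:ℝ) ≤ x ^ (1/α)))
        hfloor hdpos hdd
    refine le_trans (le_of_eq ?_) hkey
    have hx2 : x ^ (1/α - 2) = x ^ (1/α) / x ^ 2 := by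
      rw [Real.rpow_sub hx0]
      congr 1
      rw [← Real.rpow_natCast x 2]
      norm_num
    rw [hx2, hcdef]
    have hx2ne : (x:ℝ) ^ 2 ≠ 0 := by positivity
    have hune : u ^ 2 ≠ 0 := by positivity
    have h2s : (2:ℝ) + Real.sqrt 2 ≠ 0 := by positivity
    field_simp
    try exact Or.inl trivial
  -- integrability of g
  have hintg : IntervalIntegrable g volume 1 T := by
    rw [hgdef]
    apply IntervalIntegrable.mul_const
    exact intervalIntegrable_rpow (Or.inl (by linarith))
  -- compute the integral of g
  have hTβ : T ^ β = (M:ℝ) ^ (1 - α) := by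
    rw [hTdef, ← Real.rpow_mul hM0]
    congr 1
    rw [hβdef]
    field_simp
  have hintgval : ∫ x in (1:ℝ)..T, g x = (((M:ℝ) ^ (1 - α) - 1) / β) * c := by
    rw [hgdef]
    rw [intervalIntegral.integral_mul_const, integral_rpow (Or.inl (by linarith))]
    have heq : 1/α - 2 + 1 = β := by rw [hβdef]; ring
    rw [heq, Real.one_rpow, hTβ]
  -- putting things together
  have hsplit : ∫ x in (0:ℝ)..T, f x = (∫ x in (0:ℝ)..1, f x) + ∫ x in (1:ℝ)..T, f x :=
    (integral_add_adjacent_intervals (hint 0 1 le_rfl zero_le_one hT1)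
      (hint 1 T zero_le_one hT1 le_rfl)).symm
  have h01 : 0 ≤ ∫ x in (0:ℝ)..1, f x :=
    intervalIntegral.integral_nonneg zero_le_one (fun x hx => hfnn x hx.1)
  have hmono : ∫ x in (1:ℝ)..T, g x ≤ ∫ x in (1:ℝ)..T, f x :=
    intervalIntegral.integral_mono_on hT1 hintg (hint 1 T zero_le_one hT1 le_rfl) hptwise
  have hfinal : 1 / (2 * (2 + Real.sqrt 2) * β) * u * ((M:ℝ) ^ (1 - α) - 1)
      = u ^ 3 * ((((M:ℝ) ^ (1 - α) - 1) / β) * c) := by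
    rw [hcdef]
    exact aux_alg u β _ _ hu0.ne' hβpos.ne' (by positivity)
  calc 1 / (2 * (2 + Real.sqrt 2) * β) * u * ((M:ℝ) ^ (1 - α) - 1)
      = u ^ 3 * ((((M:ℝ) ^ (1 - α) - 1) / β) * c) := hfinal
    _ = u ^ 3 * ∫ x in (1:ℝ)..T, g x := by rw [hintgval]
    _ ≤ u ^ 3 * ∫ x in (1:ℝ)..T, f x :=
        mul_le_mul_of_nonneg_left hmono (by positivity)
    _ ≤ u ^ 3 * ∫ x in (0:ℝ)..T, f x := by
        rw [hsplit]
        exact mul_le_mul_of_nonneg_left (by linarith) (by positivity)
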